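/- Let m = m^z(iη), u = m/(iη + m), and let M := [[m I_n, -z u I_n], [-z̄ u I_n, m I_n]]. Then M satisfies the Matrix Dyson Equation -M⁻¹ = iη·I + Z + S[M], where Z = [[0, z I_n],[z̄ I_n, 0]] and S[R] = ⟨R E₊⟩E₊ - ⟨R E₋⟩E₋. -/

import Mathlib

/-!
`M` and every matrix in the equation are block-scalar, `[[a I, b I], [c I, d I]]`, and such
matrices multiply like the `2 × 2` scalar matrices `[[a, b], [c, d]]`. Since `⟨M E₊⟩ = m` and
`⟨M E₋⟩ = 0`, `S[M] = m I`, so the claim is that `[[m, -zu], [-z̄u, m]]` times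
`[[iη + m, z], [z̄, iη + m]]` is `-I`. The off-diagonal entries vanish because `u (iη + m) = m`,
and the diagonal entries equal `m (iη + m) - |z|² u = -1`, which is the cubic equation for `m`
multiplied by `m / (iη + m)`.
-/

open Matrix

section BlockScalar

variable {ι R : Type*} [DecidableEq ι]

def blockScalar [CommRing R] (a b c d : R) : Matrix (ι ⊕ ι) (ι ⊕ ι) R :=
  fromBlocks (a • 1) (b • 1) (c • 1) (d • 1)

variable [CommRing R]

theorem one_eq_blockScalar : (1 : Matrix (ι ⊕ ι) (ι ⊕ ι) R) = blockScalar 1 0 0 1 := by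
  simp [blockScalar, fromBlocks_one]

theorem smul_one_eq_blockScalar (a : R) :
    a • (1 : Matrix (ι ⊕ ι) (ι ⊕ ι) R) = blockScalar a 0 0 a := by
  rw [one_eq_blockScalar, blockScalar, blockScalar, fromBlocks_smul]
  simp

theorem blockScalar_add (a b c d a' b' c' d' : R) :
    (blockScalar a b c d : Matrix (ι ⊕ ι) (ι ⊕ ι) R) + blockScalar a' b' c' d' =
      blockScalar (a + a') (b + b') (c + c') (d + d') := by
  simp only [blockScalar, fromBlocks_add, add_smul]

theorem blockScalar_mul [Fintype ι] (a b c d a' b' c' d' : R) :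
    (blockScalar a b c d : Matrix (ι ⊕ ι) (ι ⊕ ι) R) * blockScalar a' b' c' d' =
      blockScalar (a * a' + b * c') (a * b' + b * d') (c * a' + d * c') (c * b' + d * d') := by
  simp only [blockScalar, fromBlocks_multiply, smul_mul_smul_comm, one_mul, add_smul]

theorem trace_blockScalar [Fintype ι] (a b c d : R) :
    (blockScalar a b c d : Matrix (ι ⊕ ι) (ι ⊕ ι) R).trace = Fintype.card ι * (a + d) := by
  simp [blockScalar, trace, Fintype.sum_sum_type, fromBlocks, diag, mul_add]

end BlockScalar

theorem Matrix.neg_inv_eq_of_mul_eq_neg_one {ι R : Type*} [Fintype ι] [DecidableEq ι]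
    [CommRing R] {A B : Matrix ι ι R} (h : A * B = -1) : -A⁻¹ = B := by
  rw [inv_eq_right_inv (B := -B) (by rw [mul_neg, h, neg_neg]), neg_neg]

/-- `S[R] = ⟨R E₊⟩ E₊ - ⟨R E₋⟩ E₋` with `E₊ = blockScalar 1 0 0 1`,
`E₋ = blockScalar 1 0 0 (-1)` and `⟨·⟩` the normalized trace. -/
theorem selfEnergy_blockScalar {ι R : Type*} [Fintype ι] [DecidableEq ι] [Field R] [CharZero R]
    (a b c : R) :
    ((2 * Fintype.card ι : R)⁻¹ *
          (blockScalar (ι := ι) a b c a * blockScalar 1 0 0 1).trace) •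
        (blockScalar 1 0 0 1 : Matrix (ι ⊕ ι) (ι ⊕ ι) R)
      - ((2 * Fintype.card ι : R)⁻¹ *
          (blockScalar (ι := ι) a b c a * blockScalar 1 0 0 (-1)).trace) •
        blockScalar 1 0 0 (-1) = a • 1 := by
  rcases isEmpty_or_nonempty ι with _ | _
  · exact Subsingleton.elim _ _
  have hcard : (2 * Fintype.card ι : R) ≠ 0 :=
    mul_ne_zero two_ne_zero (Nat.cast_ne_zero.mpr Fintype.card_ne_zero)
  rw [blockScalar_mul, blockScalar_mul, trace_blockScalar, trace_blockScalar,
    ← one_eq_blockScalar]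
  convert sub_zero (a • (1 : Matrix (ι ⊕ ι) (ι ⊕ ι) R)) using 2
  · congr 1
    field_simp
    ring
  · simp

section DysonScalar

open Complex

variable {z m u : ℂ} {η : ℝ}

theorem I_mul_add_ne_zero_of_im_mul_pos (hsign : m.im * η > 0) : I * η + m ≠ 0 := by
  intro h
  have him : η = -m.im := by linarith [show η + m.im = 0 by simpa using congrArg Complex.im h]
  rw [him] at hsign
  nlinarith [sq_nonneg m.im]

theorem ne_zero_of_im_mul_pos (hsign : m.im * η > 0) : m ≠ 0 := by
  rintro rfl
  simp at hsign

theorem dyson_scalar_diag (hsign : m.im * η > 0)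
    (heq : -(1 / m) = I * η + m - ((‖z‖ : ℝ) : ℂ) ^ 2 / (I * η + m))
    (hu : u = m / (I * η + m)) :
    m * (I * η + m) - z * (starRingEnd ℂ z * u) = -1 := by
  have hm := ne_zero_of_im_mul_pos hsign
  have ha := I_mul_add_ne_zero_of_im_mul_pos hsign
  rw [← mul_conj'] at heq
  rw [hu]
  field_simp at heq ⊢
  linear_combination -heq

theorem dyson_scalar_offdiag (hsign : m.im * η > 0) (hu : u = m / (I * η + m)) :
    u * (I * η + m) = m := by
  rw [hu, div_mul_cancel₀ _ (I_mul_add_ne_zero_of_im_mul_pos hsign)]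

end DysonScalar

theorem matrix_dyson_equation_general
    (n : ℕ) (z : ℂ) (η : ℝ) (m u : ℂ)
    (hsign : m.im * η > 0)
    (heq : -(1 / m) = Complex.I * η + m - ((‖z‖ : ℝ) : ℂ) ^ 2 / (Complex.I * η + m))
    (hu : u = m / (Complex.I * η + m)) :
    let M : Matrix (Fin n ⊕ Fin n) (Fin n ⊕ Fin n) ℂ :=
      Matrix.fromBlocks (m • 1) ((-(z * u)) • 1) ((-((starRingEnd ℂ) z * u)) • 1) (m • 1)
    let Z : Matrix (Fin n ⊕ Fin n) (Fin n ⊕ Fin n) ℂ :=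
      Matrix.fromBlocks 0 (z • 1) (((starRingEnd ℂ) z) • 1) 0
    let E₁ : Matrix (Fin n ⊕ Fin n) (Fin n ⊕ Fin n) ℂ := Matrix.fromBlocks 1 0 0 0
    let E₂ : Matrix (Fin n ⊕ Fin n) (Fin n ⊕ Fin n) ℂ := Matrix.fromBlocks 0 0 0 1
    let S : Matrix (Fin n ⊕ Fin n) (Fin n ⊕ Fin n) ℂ → Matrix (Fin n ⊕ Fin n) (Fin n ⊕ Fin n) ℂ :=
      fun T => ((((2 * n : ℂ))⁻¹ * (T * (E₁ + E₂)).trace) • (E₁ + E₂)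
        - (((2 * n : ℂ))⁻¹ * (T * (E₁ - E₂)).trace) • (E₁ - E₂))
    (-M⁻¹ = (Complex.I * η) • (1 : Matrix (Fin n ⊕ Fin n) (Fin n ⊕ Fin n) ℂ) + Z + S M) := by
  intro M Z E₁ E₂ S
  have hM : M = blockScalar m (-(z * u)) (-(starRingEnd ℂ z * u)) m := rfl
  have hZ : Z = blockScalar 0 z (starRingEnd ℂ z) 0 := by simp [Z, blockScalar]
  have hEadd : E₁ + E₂ = blockScalar 1 0 0 1 := by
    simp [E₁, E₂, blockScalar, fromBlocks_add]
  have hEsub : E₁ - E₂ = blockScalar 1 0 0 (-1) := by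
    simp [E₁, E₂, blockScalar, sub_eq_add_neg, fromBlocks_neg, fromBlocks_add]
  have hSM : S M = m • 1 := by
    simpa [S, hM, hEadd, hEsub] using
      selfEnergy_blockScalar (ι := Fin n) m (-(z * u)) (-(starRingEnd ℂ z * u))
  have hdiag := dyson_scalar_diag hsign heq hu
  have hoff := dyson_scalar_offdiag hsign hu
  rw [hSM, hZ, smul_one_eq_blockScalar, smul_one_eq_blockScalar, blockScalar_add,
    blockScalar_add]
  refine neg_inv_eq_of_mul_eq_neg_one ?_
  rw [hM, blockScalar_mul, ← neg_one_smul ℂ 1, smul_one_eq_blockScalar]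
  congr 1
  · linear_combination hdiag
  · linear_combination -z * hoff
  · linear_combination -starRingEnd ℂ z * hoff
  · linear_combination hdiag

/-- The block-constant matrix `M = [[m, -zu],[-z̄u, m]]` built from the solution `m` of the
scalar cubic equation satisfies the Matrix Dyson Equation `-M⁻¹ = iη + Z + S[M]`. -/
theorem matrix_dyson_equation
    (n : ℕ) (z : ℂ) (η : ℝ) (hη : η ≠ 0) (m u : ℂ)
    (hsign : m.im * η > 0)
    (heq : -(1 / m) = Complex.I * η + m - ((‖z‖ : ℝ) : ℂ) ^ 2 / (Complex.I * η + m))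
    (hu : u = m / (Complex.I * η + m)) :
    let M : Matrix (Fin n ⊕ Fin n) (Fin n ⊕ Fin n) ℂ :=
      Matrix.fromBlocks (m • 1) ((-(z * u)) • 1) ((-((starRingEnd ℂ) z * u)) • 1) (m • 1)
    let Z : Matrix (Fin n ⊕ Fin n) (Fin n ⊕ Fin n) ℂ :=
      Matrix.fromBlocks 0 (z • 1) (((starRingEnd ℂ) z) • 1) 0
    let E₁ : Matrix (Fin n ⊕ Fin n) (Fin n ⊕ Fin n) ℂ := Matrix.fromBlocks 1 0 0 0
    let E₂ : Matrix (Fin n ⊕ Fin n) (Fin n ⊕ Fin n) ℂ := Matrix.fromBlocks 0 0 0 1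
    let S : Matrix (Fin n ⊕ Fin n) (Fin n ⊕ Fin n) ℂ → Matrix (Fin n ⊕ Fin n) (Fin n ⊕ Fin n) ℂ :=
      fun T => ((((2 * n : ℂ))⁻¹ * (T * (E₁ + E₂)).trace) • (E₁ + E₂)
        - (((2 * n : ℂ))⁻¹ * (T * (E₁ - E₂)).trace) • (E₁ - E₂))
    (-M⁻¹ = (Complex.I * η) • (1 : Matrix (Fin n ⊕ Fin n) (Fin n ⊕ Fin n) ℂ) + Z + S M) :=
  matrix_dyson_equation_general n z η m u hsign heq hu
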